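/- Let m be an even positive integer, β > 0, and for k = 0, …, m/2 − 1 set μ_k = cos((1+2k)π/(2m)) > 0 and ω_k = sin((1+2k)π/(2m)) > 0. Let c_k, d_k be real numbers and define L(t) = Σ_{k=0}^{m/2−1} β e^{−βμ_k t} [c_k cos(ω_k β t) + d_k sin(ω_k β t)] for t ≥ 0. Assume the (one-sided) derivatives at 0 satisfy L^{(j)}(0) = 0 for every odd j with 1 ≤ j ≤ 2m−3 and L^{(2m−1)}(0) = β^{2m}/2. Then for every continuous function G : [0,1] → ℝ, the function F_0(t) = ∫_0^1 L(|t−s|) G(s) ds is 2m times continuously differentiable on [0,1] and satisfies β^{−2m} F_0^{(2m)}(t) + F_0(t) = G(t) for all t ∈ [0,1]. -/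

import Mathlib

/-!
Write `L = Re K` with `K(t) = Σ_k a_k e^{r_k t}`, `a_k = β (c_k - i d_k)` and
`r_k = β (-μ_k + i ω_k)`, so that `r_k^{2m} = -β^{2m}`. Splitting the integral at `s = t`,
`F₀(t) = Re Σ_k a_k (∫₀ᵗ e^{r_k (t-s)} G(s) ds + ∫ₜ¹ e^{-r_k (t-s)} G(s) ds)`.
Each differentiation multiplies the two Duhamel integrals by `r_k` and `-r_k` and produces the jump
term `Re Σ_k a_k (r_k^j - (-r_k)^j) · G(t) = (1 - (-1)^j) L^{(j)}(0) G(t)`. The conditions on the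
odd derivatives of `L` at `0` make all jumps vanish except the last one, which is `β^{2m} G`, and
`r_k^{2m} = -β^{2m}` turns the `2m`-th derivative of the integral part back into `-β^{2m} F₀`.
-/

open Complex intervalIntegral Set

theorem iteratedDeriv_eq_of_hasDerivAt_succ {𝕜 F : Type*} [NontriviallyNormedField 𝕜]
    [NormedAddCommGroup F] [NormedSpace 𝕜 F] {ψ : ℕ → 𝕜 → F} {n : ℕ}
    (h : ∀ j < n, ∀ x, HasDerivAt (ψ j) (ψ (j + 1) x) x) {j : ℕ} (hj : j ≤ n) :
    iteratedDeriv j (ψ 0) = ψ j := by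
  induction j with
  | zero => exact iteratedDeriv_zero
  | succ j ih =>
    funext x
    rw [iteratedDeriv_succ, ih (by omega), (h j (by omega) x).deriv]

theorem HasDerivAt.complex_re {f : ℝ → ℂ} {f' : ℂ} {x : ℝ} (h : HasDerivAt f f' x) :
    HasDerivAt (fun t => (f t).re) f'.re x :=
  reCLM.hasFDerivAt.comp_hasDerivAt x h

theorem hasDerivAt_cexp_mul_ofReal (z : ℂ) (t : ℝ) :
    HasDerivAt (fun t : ℝ => cexp (z * t)) (z * cexp (z * t)) t := by
  simpa [mul_comm] using ((hasDerivAt_id t).ofReal_comp.const_mul z).cexp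

theorem ContinuousOn.exists_continuous_eqOn_Icc {a b : ℝ} (hab : a ≤ b) {G : ℝ → ℝ}
    (hG : ContinuousOn G (Icc a b)) : ∃ g : ℝ → ℝ, Continuous g ∧ EqOn g G (Icc a b) :=
  ⟨fun x => G (projIcc a b hab x),
    hG.comp_continuous (continuous_subtype_val.comp continuous_projIcc)
      fun x => (projIcc a b _ x).2,
    fun x hx => by simp only [projIcc_of_mem _ hx]⟩

theorem ContDiff.contDiffOn_Icc_and_iteratedDerivWithin_of_eqOn {a b : ℝ} (hab : a < b) {n : ℕ}
    {f F : ℝ → ℝ} (hf : ContDiff ℝ n f) (hF : EqOn F f (Icc a b)) :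
    ContDiffOn ℝ n F (Icc a b) ∧
      ∀ t ∈ Icc a b, iteratedDerivWithin n F (Icc a b) t = iteratedDeriv n f t :=
  ⟨hf.contDiffOn.congr hF, fun t ht => by
    rw [iteratedDerivWithin_congr hF ht,
      iteratedDerivWithin_eq_iteratedDeriv (uniqueDiffOn_Icc hab) hf.contDiffAt ht]⟩

section ExponentialKernel

variable {ι : Type*} (s : Finset ι) (a r : ι → ℂ)

noncomputable def expSumDeriv (j : ℕ) (t : ℝ) : ℂ :=
  ∑ k ∈ s, a k * r k ^ j * cexp (r k * t)

theorem hasDerivAt_expSumDeriv (j : ℕ) (t : ℝ) :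
    HasDerivAt (expSumDeriv s a r j) (expSumDeriv s a r (j + 1) t) t := by
  refine (HasDerivAt.fun_sum fun k _ =>
    (hasDerivAt_cexp_mul_ofReal (r k) t).const_mul (a k * r k ^ j)).congr_deriv ?_
  simp only [expSumDeriv, pow_succ]
  exact Finset.sum_congr rfl fun k _ => by ring

theorem continuous_expSumDeriv (j : ℕ) : Continuous (expSumDeriv s a r j) :=
  continuous_iff_continuousAt.2 fun t => (hasDerivAt_expSumDeriv s a r j t).continuousAt

theorem iteratedDeriv_re_expSumDeriv (j : ℕ) :
    iteratedDeriv j (fun t => (expSumDeriv s a r 0 t).re) = fun t => (expSumDeriv s a r j t).re :=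
  iteratedDeriv_eq_of_hasDerivAt_succ (ψ := fun j t => (expSumDeriv s a r j t).re)
    (fun i _ t => (hasDerivAt_expSumDeriv s a r i t).complex_re) le_rfl

theorem expSumDeriv_apply_zero (j : ℕ) : expSumDeriv s a r j 0 = ∑ k ∈ s, a k * r k ^ j := by
  simp [expSumDeriv]

theorem expSumDeriv_zero_neg (t : ℝ) : expSumDeriv s a r 0 (-t) = expSumDeriv s a (-r) 0 t := by
  simp [expSumDeriv]

end ExponentialKernel

noncomputable def expConv (z : ℂ) (x₀ : ℝ) (g : ℝ → ℂ) (t : ℝ) : ℂ :=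
  ∫ u in x₀..t, cexp (z * (t - u)) * g u

theorem expConv_eq_cexp_mul_integral (z : ℂ) (x₀ : ℝ) (g : ℝ → ℂ) (t : ℝ) :
    expConv z x₀ g t = cexp (z * t) * ∫ u in x₀..t, cexp (-z * u) * g u := by
  rw [expConv, ← integral_const_mul]
  congr 1 with u
  rw [← mul_assoc, ← Complex.exp_add]
  ring_nf

theorem hasDerivAt_expConv (z : ℂ) (x₀ : ℝ) {g : ℝ → ℂ} (hg : Continuous g) (t : ℝ) :
    HasDerivAt (expConv z x₀ g) (z * expConv z x₀ g t + g t) t := by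
  have hI : HasDerivAt (fun t => ∫ u in x₀..t, cexp (-z * u) * g u) (cexp (-z * t) * g t) t :=
    ((by fun_prop : Continuous fun u : ℝ => cexp (-z * u) * g u).integral_hasStrictDerivAt
      x₀ t).hasDerivAt
  rw [funext (expConv_eq_cexp_mul_integral z x₀ g)]
  refine ((hasDerivAt_cexp_mul_ofReal z t).mul hI).congr_deriv ?_
  beta_reduce
  rw [← mul_assoc (cexp _), ← Complex.exp_add]
  simp only [neg_mul, add_neg_cancel, Complex.exp_zero]
  ring

section GreenFunction

variable {ι : Type*} (s : Finset ι) (a r : ι → ℂ)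

/-- `Φ_j`: the `j`-th derivative of `t ↦ ∫₀¹ K(|t - u|) g(u) du`, `K = expSumDeriv s a r 0`,
with the jump terms at `u = t` left out (see `hasDerivAt_greenPhi`); on `[0, 1]`, `Φ_0` is
that integral. -/
noncomputable def greenPhi (g : ℝ → ℂ) (j : ℕ) (t : ℝ) : ℂ :=
  ∑ k ∈ s, a k * (r k ^ j * expConv (r k) 0 g t - (-r k) ^ j * expConv (-r k) 1 g t)

theorem hasDerivAt_greenPhi {g : ℝ → ℂ} (hg : Continuous g) (j : ℕ) (t : ℝ) :
    HasDerivAt (greenPhi s a r g j)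
      (greenPhi s a r g (j + 1) t + (∑ k ∈ s, a k * (r k ^ j - (-r k) ^ j)) * g t) t := by
  refine (HasDerivAt.fun_sum fun k _ =>
    (((hasDerivAt_expConv (r k) 0 hg t).const_mul (r k ^ j)).sub
      ((hasDerivAt_expConv (-r k) 1 hg t).const_mul ((-r k) ^ j))).const_mul
        (a k)).congr_deriv ?_
  rw [greenPhi, Finset.sum_mul, ← Finset.sum_add_distrib]
  exact Finset.sum_congr rfl fun k _ => by ring

theorem sum_mul_pow_sub_neg_pow (j : ℕ) :
    ∑ k ∈ s, a k * (r k ^ j - (-r k) ^ j) = (1 - (-1) ^ j) * ∑ k ∈ s, a k * r k ^ j := by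
  rw [Finset.mul_sum]
  exact Finset.sum_congr rfl fun k _ => by rw [neg_pow]; ring

theorem greenPhi_of_pow_eq {n : ℕ} (hn : Even n) {w : ℂ} (hr : ∀ k ∈ s, r k ^ n = w)
    (g : ℝ → ℂ) (t : ℝ) : greenPhi s a r g n t = w * greenPhi s a r g 0 t := by
  rw [greenPhi, greenPhi, Finset.mul_sum]
  refine Finset.sum_congr rfl fun k hk => ?_
  rw [hn.neg_pow, hr k hk]
  ring

theorem integral_expSumDeriv_sub_mul {g : ℝ → ℂ} (hg : Continuous g) (x₀ t : ℝ) :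
    ∫ u in x₀..t, expSumDeriv s a r 0 (t - u) * g u =
      ∑ k ∈ s, a k * expConv (r k) x₀ g t := by
  simp only [expSumDeriv, pow_zero, mul_one, Finset.sum_mul]
  rw [integral_finsetSum fun k _ => (by fun_prop : Continuous fun u : ℝ =>
    a k * cexp (r k * ↑(t - u)) * g u).intervalIntegrable _ _]
  refine Finset.sum_congr rfl fun k _ => ?_
  rw [expConv, ← integral_const_mul]
  simp only [ofReal_sub, mul_assoc]

theorem integral_expSumDeriv_abs_sub_mul {g : ℝ → ℂ} (hg : Continuous g) {t : ℝ}
    (ht : t ∈ Icc 0 1) :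
    ∫ u in (0 : ℝ)..1, expSumDeriv s a r 0 |t - u| * g u = greenPhi s a r g 0 t := by
  have hcont : Continuous fun u => expSumDeriv s a r 0 |t - u| * g u :=
    ((continuous_expSumDeriv s a r 0).comp (by fun_prop)).mul hg
  rw [← integral_add_adjacent_intervals (hcont.intervalIntegrable 0 t)
    (hcont.intervalIntegrable t 1)]
  have hleft : EqOn (fun u => expSumDeriv s a r 0 |t - u| * g u)
      (fun u => expSumDeriv s a r 0 (t - u) * g u) (uIcc 0 t) := fun u hu => by
    rw [uIcc_of_le ht.1] at hu
    simp only [abs_of_nonneg (sub_nonneg.2 hu.2)]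
  have hright : EqOn (fun u => expSumDeriv s a r 0 |t - u| * g u)
      (fun u => expSumDeriv s a (-r) 0 (t - u) * g u) (uIcc t 1) := fun u hu => by
    rw [uIcc_of_le ht.2] at hu
    simp only [abs_of_nonpos (sub_nonpos.2 hu.1), expSumDeriv_zero_neg]
  rw [integral_congr hleft, integral_congr hright, integral_symm 1 t,
    integral_expSumDeriv_sub_mul s a r hg, integral_expSumDeriv_sub_mul s a (-r) hg, greenPhi,
    ← Finset.sum_neg_distrib, ← Finset.sum_add_distrib]
  exact Finset.sum_congr rfl fun k _ => by simp only [Pi.neg_apply]; ring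

noncomputable def greenPsi (g : ℝ → ℝ) (j : ℕ) (t : ℝ) : ℝ :=
  (greenPhi s a r (fun u => (g u : ℂ)) j t).re

theorem hasDerivAt_greenPsi {g : ℝ → ℝ} (hg : Continuous g) (j : ℕ) (t : ℝ) :
    HasDerivAt (greenPsi s a r g j)
      (greenPsi s a r g (j + 1) t + (1 - (-1) ^ j) * (∑ k ∈ s, a k * r k ^ j).re * g t) t := by
  refine (hasDerivAt_greenPhi s a r (by fun_prop : Continuous fun u => (g u : ℂ)) j
    t).complex_re.congr_deriv ?_
  rw [sum_mul_pow_sub_neg_pow, add_re, greenPsi,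
    show (1 - (-1) ^ j : ℂ) = ((1 - (-1) ^ j : ℝ) : ℂ) by push_cast; rfl,
    re_mul_ofReal, re_ofReal_mul]

theorem integral_re_expSumDeriv_abs_sub_mul {g : ℝ → ℝ} (hg : Continuous g) {t : ℝ}
    (ht : t ∈ Icc 0 1) :
    ∫ u in (0 : ℝ)..1, (expSumDeriv s a r 0 |t - u|).re * g u = greenPsi s a r g 0 t := by
  have hcont : Continuous fun u => expSumDeriv s a r 0 |t - u| * (g u : ℂ) := by
    have := continuous_expSumDeriv s a r 0
    fun_prop
  have hre := reCLM.intervalIntegral_comp_comm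
    (hcont.intervalIntegrable (μ := MeasureTheory.volume) 0 1)
  simp only [reCLM_apply, re_mul_ofReal] at hre
  rw [greenPsi, ← integral_expSumDeriv_abs_sub_mul s a r (by fun_prop) ht, hre]

theorem differentiable_greenPsi {g : ℝ → ℝ} (hg : Continuous g) (j : ℕ) :
    Differentiable ℝ (greenPsi s a r g j) :=
  fun t => (hasDerivAt_greenPsi s a r hg j t).differentiableAt

theorem iteratedDeriv_greenPsi {m : ℕ}
    (hodd : ∀ j, Odd j → j < 2 * m - 1 → (∑ k ∈ s, a k * r k ^ j).re = 0)
    {g : ℝ → ℝ} (hg : Continuous g) {j : ℕ} (hj : j ≤ 2 * m - 1) :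
    iteratedDeriv j (greenPsi s a r g 0) = greenPsi s a r g j := by
  refine iteratedDeriv_eq_of_hasDerivAt_succ (fun i hi t => ?_) hj
  have hjump : (1 - (-1) ^ i) * (∑ k ∈ s, a k * r k ^ i).re = 0 := by
    rcases Nat.even_or_odd i with heven | hodd'
    · rw [heven.neg_one_pow, sub_self, zero_mul]
    · rw [hodd i hodd' hi, mul_zero]
  simpa only [hjump, zero_mul, add_zero] using hasDerivAt_greenPsi s a r hg i t

theorem contDiff_greenPsi_and_iteratedDeriv_two_mul {m : ℕ} (hm : 0 < m) {w : ℝ}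
    (hr : ∀ k ∈ s, r k ^ (2 * m) = -w)
    (hodd : ∀ j, Odd j → j < 2 * m - 1 → (∑ k ∈ s, a k * r k ^ j).re = 0)
    (htop : (∑ k ∈ s, a k * r k ^ (2 * m - 1)).re = w / 2)
    {g : ℝ → ℝ} (hg : Continuous g) :
    ContDiff ℝ (2 * m) (greenPsi s a r g 0) ∧
      ∀ t, iteratedDeriv (2 * m) (greenPsi s a r g 0) t = w * (g t - greenPsi s a r g 0 t) := by
  have hlast : ∀ t, HasDerivAt (greenPsi s a r g (2 * m - 1))
      (w * (g t - greenPsi s a r g 0 t)) t := fun t => by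
    refine (hasDerivAt_greenPsi s a r hg (2 * m - 1) t).congr_deriv ?_
    rw [Nat.sub_add_cancel (by omega), greenPsi, greenPhi_of_pow_eq s a r (even_two_mul m) hr,
      htop, (Nat.Even.sub_odd (by omega) (even_two_mul m) odd_one).neg_one_pow, ← ofReal_neg,
      re_ofReal_mul, greenPsi]
    ring
  have htwo : iteratedDeriv (2 * m) (greenPsi s a r g 0) =
      fun t => w * (g t - greenPsi s a r g 0 t) := by
    rw [show 2 * m = 2 * m - 1 + 1 by omega, iteratedDeriv_succ,
      iteratedDeriv_greenPsi s a r hodd hg le_rfl]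
    exact funext fun t => (hlast t).deriv
  refine ⟨contDiff_iff_iteratedDeriv.2 ⟨fun j hj => ?_, fun j hj => ?_⟩, congrFun htwo⟩
  · norm_cast at hj
    rcases hj.lt_or_eq with hj | rfl
    · rw [iteratedDeriv_greenPsi s a r hodd hg (by omega)]
      exact (differentiable_greenPsi s a r hg j).continuous
    · rw [htwo]
      have := (differentiable_greenPsi s a r hg 0).continuous
      fun_prop
  · norm_cast at hj
    rw [iteratedDeriv_greenPsi s a r hodd hg (by omega)]
    exact differentiable_greenPsi s a r hg j

end GreenFunction

/-- The paper's `β (-μ_k + i ω_k) = -β e^{-iθ_k}` with `θ_k = (1 + 2k)π / (2m)`. -/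
noncomputable def kernelRoot (m : ℕ) (β : ℝ) (k : ℕ) : ℂ :=
  β * (-(Real.cos ((1 + 2 * (k : ℝ)) * Real.pi / (2 * m)) : ℂ) +
    Real.sin ((1 + 2 * (k : ℝ)) * Real.pi / (2 * m)) * I)

noncomputable def kernelCoeff (β : ℝ) (c d : ℕ → ℝ) (k : ℕ) : ℂ := β * (c k - d k * I)

theorem re_sub_mul_I_mul_cexp (c d x y : ℝ) :
    ((c - d * I) * cexp (x + y * I)).re = Real.exp x * (c * Real.cos y + d * Real.sin y) := by
  simp [mul_re, exp_re, exp_im]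
  ring

theorem re_kernelCoeff_mul_cexp_kernelRoot (m : ℕ) (β : ℝ) (c d : ℕ → ℝ) (k : ℕ)
    (t : ℝ) :
    (kernelCoeff β c d k * cexp (kernelRoot m β k * t)).re =
      β * Real.exp (-(β * Real.cos ((1 + 2 * (k : ℝ)) * Real.pi / (2 * m))) * t) *
        (c k * Real.cos (Real.sin ((1 + 2 * (k : ℝ)) * Real.pi / (2 * m)) * β * t) +
         d k * Real.sin (Real.sin ((1 + 2 * (k : ℝ)) * Real.pi / (2 * m)) * β * t)) := by
  set θ : ℝ := (1 + 2 * (k : ℝ)) * Real.pi / (2 * m)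
  have hexp : kernelRoot m β k * t = ((-(β * Real.cos θ) * t : ℝ) : ℂ) +
      ((Real.sin θ * β * t : ℝ) : ℂ) * I := by
    simp only [kernelRoot, θ]
    push_cast
    ring
  rw [hexp, kernelCoeff, mul_assoc, re_ofReal_mul, re_sub_mul_I_mul_cexp]
  ring

theorem kernelRoot_pow_two_mul {m : ℕ} (hm : m ≠ 0) (β : ℝ) (k : ℕ) :
    kernelRoot m β k ^ (2 * m) = -((β ^ (2 * m) : ℝ) : ℂ) := by
  set z : ℂ := -(((1 + 2 * (k : ℝ)) * Real.pi / (2 * m) : ℝ) : ℂ)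
  have hz : ((2 * m : ℕ) : ℂ) * z = -(((2 * k + 1 : ℕ) * Real.pi : ℝ) : ℂ) := by
    simp only [z]
    push_cast
    field_simp
    ring
  have hroot : kernelRoot m β k = β * -(cos z + sin z * I) := by
    simp only [kernelRoot, z, cos_neg, sin_neg, ofReal_cos, ofReal_sin]
    ring
  rw [hroot, mul_pow, (even_two_mul m).neg_pow, cos_add_sin_mul_I_pow, hz, cos_neg, sin_neg,
    ← ofReal_cos, ← ofReal_sin, Real.cos_nat_mul_pi, Real.sin_nat_mul_pi,
    (odd_two_mul_add_one k).neg_one_pow]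
  push_cast
  ring


theorem stmt_6_general (m : ℕ) (hm0 : 0 < m) (β : ℝ) (hβ : 0 < β)
    (c d : ℕ → ℝ) (L : ℝ → ℝ)
    (hL : ∀ t : ℝ, L t = ∑ k ∈ Finset.range (m / 2),
      β * Real.exp (-(β * Real.cos ((1 + 2 * (k : ℝ)) * Real.pi / (2 * m))) * t) *
        (c k * Real.cos (Real.sin ((1 + 2 * (k : ℝ)) * Real.pi / (2 * m)) * β * t) +
         d k * Real.sin (Real.sin ((1 + 2 * (k : ℝ)) * Real.pi / (2 * m)) * β * t)))
    (hodd : ∀ j : ℕ, Odd j → 1 ≤ j → j ≤ 2 * m - 3 → iteratedDeriv j L 0 = 0)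
    (htop : iteratedDeriv (2 * m - 1) L 0 = β ^ (2 * m) / 2)
    (G : ℝ → ℝ) (hG : ContinuousOn G (Set.Icc 0 1))
    (F₀ : ℝ → ℝ) (hF₀ : ∀ t : ℝ, F₀ t = ∫ s in (0:ℝ)..1, L |t - s| * G s) :
    ContDiffOn ℝ (2 * m : ℕ) F₀ (Set.Icc 0 1) ∧
      ∀ t ∈ Set.Icc (0:ℝ) 1,
        (β ^ (2 * m))⁻¹ * iteratedDerivWithin (2 * m) F₀ (Set.Icc 0 1) t + F₀ t = G t := by
  set s := Finset.range (m / 2)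
  set a := kernelCoeff β c d
  set r := kernelRoot m β
  have hLre : L = fun t => (expSumDeriv s a r 0 t).re := funext fun t => by
    simp only [hL, expSumDeriv, re_sum, pow_zero, mul_one, a, r, re_kernelCoeff_mul_cexp_kernelRoot]
  have hLderiv (j : ℕ) : iteratedDeriv j L 0 = (∑ k ∈ s, a k * r k ^ j).re := by
    rw [hLre, iteratedDeriv_re_expSumDeriv]
    exact congrArg re (expSumDeriv_apply_zero s a r j)
  obtain ⟨g, hgc, hgG⟩ := hG.exists_continuous_eqOn_Icc zero_le_one
  obtain ⟨hψ, hode⟩ := contDiff_greenPsi_and_iteratedDeriv_two_mul s a r hm0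
    (fun k _ => kernelRoot_pow_two_mul hm0.ne' β k)
    (fun j ⟨p, hp⟩ hj => by rw [← hLderiv]; exact hodd j ⟨p, hp⟩ (by omega) (by omega))
    (by rw [← hLderiv, htop]) hgc
  have hF : EqOn F₀ (greenPsi s a r g 0) (Icc 0 1) := fun t ht => by
    rw [hF₀, ← integral_re_expSumDeriv_abs_sub_mul s a r hgc ht]
    refine integral_congr fun u hu => ?_
    rw [uIcc_of_le zero_le_one] at hu
    simp only [hLre, hgG hu]
  obtain ⟨hFsmooth, hFderiv⟩ :=
    hψ.contDiffOn_Icc_and_iteratedDerivWithin_of_eqOn zero_lt_one hF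
  refine ⟨hFsmooth, fun t ht => ?_⟩
  rw [hFderiv t ht, hode, ← hF ht, hgG ht]
  field_simp
  ring

/-- Green's-function property of Section 3.1 (even `m`): with
`L(t) = Σ_{k<m/2} β e^{−βμ_k t}[c_k cos(ω_k β t) + d_k sin(ω_k β t)]` satisfying
`L^{(j)}(0) = 0` for odd `1 ≤ j ≤ 2m−3` and `L^{(2m−1)}(0) = β^{2m}/2`, the function
`F₀(t) = ∫_0^1 L(|t−s|) G(s) ds` is `2m` times continuously differentiable on `[0,1]`
and solves `β^{−2m} F₀^{(2m)} + F₀ = G` there. -/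
theorem stmt_6 (m : ℕ) (hm : Even m) (hm0 : 0 < m) (β : ℝ) (hβ : 0 < β)
    (c d : ℕ → ℝ) (L : ℝ → ℝ)
    (hL : ∀ t : ℝ, L t = ∑ k ∈ Finset.range (m / 2),
      β * Real.exp (-(β * Real.cos ((1 + 2 * (k : ℝ)) * Real.pi / (2 * m))) * t) *
        (c k * Real.cos (Real.sin ((1 + 2 * (k : ℝ)) * Real.pi / (2 * m)) * β * t) +
         d k * Real.sin (Real.sin ((1 + 2 * (k : ℝ)) * Real.pi / (2 * m)) * β * t)))
    (hodd : ∀ j : ℕ, Odd j → 1 ≤ j → j ≤ 2 * m - 3 → iteratedDeriv j L 0 = 0)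
    (htop : iteratedDeriv (2 * m - 1) L 0 = β ^ (2 * m) / 2)
    (G : ℝ → ℝ) (hG : ContinuousOn G (Set.Icc 0 1))
    (F₀ : ℝ → ℝ) (hF₀ : ∀ t : ℝ, F₀ t = ∫ s in (0:ℝ)..1, L |t - s| * G s) :
    ContDiffOn ℝ (2 * m : ℕ) F₀ (Set.Icc 0 1) ∧
      ∀ t ∈ Set.Icc (0:ℝ) 1,
        (β ^ (2 * m))⁻¹ * iteratedDerivWithin (2 * m) F₀ (Set.Icc 0 1) t + F₀ t = G t :=
  stmt_6_general m hm0 β hβ c d L hL hodd htop G hG F₀ hF₀
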